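/- arXiv:2405.15748 — 2 statements merged into one kernel-verified Lean document; each statement's English description precedes it below -/
import Mathlib

section
/- If M is a G-module and H ≤ G is a subgroup of finite index n with coset representatives g_1,...,g_n, then the map sending φ to Σ_j g_j ⊗ φ(g_j⁻¹) is an isomorphism of G-modules from Hom_{ℤ[H]}(ℤ[G], M) to ℤ[G] ⊗_{ℤ[H]} M. -/
namespace GroupCoh

variable (G : Type) [Group G] (M : Type) [AddCommGroup M] [DistribMulAction G M]

/-- Inhomogeneous cochains: functions `G^m → M`. -/
abbrev C (m : ℕ) : Type := (Fin m → G) → M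

/-- The standard inhomogeneous coboundary map. -/
def dPlus (m : ℕ) : C G M m →+ C G M (m + 1) :=
  AddMonoidHom.mk' (fun f g =>
    g 0 • f (fun i => g i.succ) +
      ∑ j : Fin (m + 1), ((-1 : ℤ) ^ (j.val + 1)) • f (Fin.contractNth j (· * ·) g))
    (fun a b => by
      funext g
      simp only [Pi.add_apply, smul_add, Finset.sum_add_distrib]
      abel)

/-- Coboundaries in degree `r`. -/
def cobound : ∀ r : ℕ, AddSubgroup (C G M r)
  | 0 => ⊥
  | (r + 1) => (dPlus G M r).range

/-- Group cohomology `H^r(G, M)`, computed by the inhomogeneous cochain complex. -/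
def Hcoh (r : ℕ) : Type :=
  (dPlus G M r).ker ⧸ (cobound G M r).addSubgroupOf (dPlus G M r).ker

instance (r : ℕ) : AddCommGroup (Hcoh G M r) := inferInstanceAs (AddCommGroup (_ ⧸ _))

/-- Inhomogeneous chains: finitely supported functions `G^m →₀ M`. -/
abbrev Ch (m : ℕ) : Type := (Fin m → G) →₀ M

/-- The standard inhomogeneous boundary map on chains. -/
noncomputable def dChain (m : ℕ) : Ch G M (m + 1) →+ Ch G M m :=
  Finsupp.liftAddHom (fun γ =>
    AddMonoidHom.mk' (fun x =>
      Finsupp.single (fun i => γ i.succ) ((γ 0)⁻¹ • x) +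
        (∑ j : Fin m, ((-1 : ℤ) ^ (j.val + 1)) •
          Finsupp.single (Fin.contractNth j.castSucc (· * ·) γ) x) +
        ((-1 : ℤ) ^ (m + 1)) • Finsupp.single (fun i => γ i.castSucc) x)
      (fun a b => by
        simp only [smul_add, Finsupp.single_add, Finset.sum_add_distrib]
        abel))

/-- Cycles in degree `r`. -/
noncomputable def cyc : ∀ r : ℕ, AddSubgroup (Ch G M r)
  | 0 => ⊤
  | (r + 1) => (dChain G M r).ker

/-- Group homology `H_r(G, M)`, computed by the inhomogeneous chain complex. -/
noncomputable def Hhom (r : ℕ) : Type :=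
  cyc G M r ⧸ ((dChain G M r).range.addSubgroupOf (cyc G M r))

noncomputable instance (r : ℕ) : AddCommGroup (Hhom G M r) :=
  inferInstanceAs (AddCommGroup (_ ⧸ _))

end GroupCoh

section

variable (G : Type) [Group G] (H : Subgroup G)
variable (M : Type) [AddCommGroup M] [DistribMulAction H M]

/-- The coinduced module `Hom_{ℤ[H]}(ℤ[G], M)`, modelled as the group of `H`-equivariant
functions `G → M`. -/
def Coind : AddSubgroup (G → M) where
  carrier := {f : G → M | ∀ (h : H) (g : G), f ((h : G) * g) = h • f g}
  zero_mem' := fun h g => (smul_zero h).symm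
  add_mem' := fun {a b} ha hb h g => by
    show a ((h : G) * g) + b ((h : G) * g) = h • (a g + b g)
    rw [ha h g, hb h g, smul_add]
  neg_mem' := fun {a} ha h g => by
    show -a ((h : G) * g) = h • (-(a g))
    rw [ha h g, smul_neg]

/-- The `G`-action on the coinduced module, `(σ • f)(g) = f(gσ)`. -/
instance : DistribMulAction G (Coind G H M) where
  smul σ f := ⟨fun g => (f : G → M) (g * σ), fun h g => by
    simpa [mul_assoc] using f.2 h (g * σ)⟩
  one_smul f := Subtype.ext (funext fun g => by
    show (f : G → M) (g * 1) = (f : G → M) g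
    rw [mul_one])
  mul_smul σ τ f := Subtype.ext (funext fun g => by
    show (f : G → M) (g * (σ * τ)) = (f : G → M) (g * σ * τ)
    rw [mul_assoc])
  smul_zero σ := Subtype.ext (funext fun g => rfl)
  smul_add f₁ f₂ σ := Subtype.ext (funext fun g => rfl)

/-- The relations defining the induced module `ℤ[G] ⊗_{ℤ[H]} M` as a quotient of the free
`M`-valued finsupps on `G`: `gh ⊗ m = g ⊗ hm`. -/
noncomputable def indRel : AddSubgroup (G →₀ M) :=
  AddSubgroup.closure
    {x | ∃ (g : G) (h : H) (m : M),
      x = Finsupp.single (g * (h : G)) m - Finsupp.single g (h • m)}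

/-- The induced module `ℤ[G] ⊗_{ℤ[H]} M`. -/
noncomputable def Ind : Type := (G →₀ M) ⧸ indRel G H M

noncomputable instance : AddCommGroup (Ind G H M) := inferInstanceAs (AddCommGroup (_ ⧸ _))

/-- Left translation by `σ` on `G →₀ M`. -/
noncomputable def indSmulAux (σ : G) : (G →₀ M) →+ (G →₀ M) :=
  Finsupp.mapDomain.addMonoidHom (fun g => σ * g)

theorem indRel_le_comap (σ : G) :
    indRel G H M ≤ (indRel G H M).comap (indSmulAux G M σ) := by
  rw [indRel, AddSubgroup.closure_le]
  rintro x ⟨g, h, m, rfl⟩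
  simp only [SetLike.mem_coe, AddSubgroup.mem_comap, map_sub, indSmulAux,
    Finsupp.mapDomain.addMonoidHom_apply, Finsupp.mapDomain_single]
  exact AddSubgroup.subset_closure ⟨σ * g, h, m, by rw [mul_assoc]⟩

/-- The `G`-action on the induced module, induced by left translation. -/
noncomputable instance : DistribMulAction G (Ind G H M) where
  smul σ := QuotientAddGroup.map _ _ (indSmulAux G M σ) (indRel_le_comap G H M σ)
  one_smul x := by
    induction x using QuotientAddGroup.induction_on with
    | H a =>
      show QuotientAddGroup.mk (Finsupp.mapDomain (fun g => (1 : G) * g) a) = _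
      have : (fun g : G => (1 : G) * g) = id := funext fun g => one_mul g
      rw [this, Finsupp.mapDomain_id]
  mul_smul σ τ x := by
    induction x using QuotientAddGroup.induction_on with
    | H a =>
      show QuotientAddGroup.mk (Finsupp.mapDomain (fun g => σ * τ * g) a) =
        QuotientAddGroup.mk (Finsupp.mapDomain (fun g => σ * g)
          (Finsupp.mapDomain (fun g => τ * g) a))
      rw [← Finsupp.mapDomain_comp]
      have : ((fun g : G => σ * g) ∘ fun g : G => τ * g) = fun g : G => σ * τ * g :=
        funext fun g => by simp [mul_assoc]
      rw [this]
  smul_zero σ := map_zero _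
  smul_add σ x y := map_add _ x y

end


/-- The map `φ ↦ Σ_j g_j ⊗ φ(g_j⁻¹)`, where the `g_j` are coset representatives of `H`
in `G`. -/
noncomputable def coindToInd (G : Type) [Group G] (H : Subgroup G)
    (M : Type) [AddCommGroup M] [DistribMulAction H M] [Finite (G ⧸ H)]
    (φ : Coind G H M) : Ind G H M :=
  letI : Fintype (G ⧸ H) := Fintype.ofFinite _
  QuotientAddGroup.mk
    (∑ c : G ⧸ H, Finsupp.single (Quotient.out c) ((φ : G → M) ((Quotient.out c)⁻¹)))

/-!
The inverse sends `g ⊗ m` to the `H`-equivariant function `x ↦ (x * g) • m`, extended by zero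
off `H * g⁻¹`. It is well defined on `ℤ[G] ⊗_{ℤ[H]} M` and intertwines left translation with
right translation, and both composites are the identity because in each sum over the cosets of
`H` exactly one term survives. Equivariance of `φ ↦ Σ_j g_j ⊗ φ(g_j⁻¹)` then follows from that
of its inverse.
-/

section

variable {G : Type} [Group G] {H : Subgroup G} {M : Type} [AddCommGroup M] [DistribMulAction H M]

theorem QuotientGroup.out_inv_mul_mem_iff (c : G ⧸ H) (g : G) :
    (Quotient.out c)⁻¹ * g ∈ H ↔ c = g := by
  rw [← QuotientGroup.eq, QuotientGroup.out_eq']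

theorem QuotientGroup.mul_out_mem_iff (x : G) (c : G ⧸ H) :
    x * Quotient.out c ∈ H ↔ c = ((x⁻¹ : G) : G ⧸ H) := by
  rw [← H.inv_mem_iff, mul_inv_rev, QuotientGroup.out_inv_mul_mem_iff]

theorem Ind.mk_single_mul (g : G) (h : H) (m : M) :
    (QuotientAddGroup.mk (Finsupp.single (g * h) m) : Ind G H M) =
      QuotientAddGroup.mk (Finsupp.single g (h • m)) :=
  QuotientAddGroup.eq_iff_sub_mem.mpr (AddSubgroup.subset_closure ⟨g, h, m, rfl⟩)

open scoped Classical in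
variable (H M) in
noncomputable def smulOrZero (x : G) : M →+ M :=
  if hx : x ∈ H then DistribSMul.toAddMonoidHom M (⟨x, hx⟩ : H) else 0

theorem smulOrZero_of_mem {x : G} (hx : x ∈ H) (m : M) :
    smulOrZero H M x m = (⟨x, hx⟩ : H) • m := by
  simp [smulOrZero, hx]

theorem smulOrZero_of_notMem {x : G} (hx : x ∉ H) (m : M) : smulOrZero H M x m = 0 := by
  simp [smulOrZero, hx]

theorem smulOrZero_mul_left (h : H) (x : G) (m : M) :
    smulOrZero H M (h * x) m = h • smulOrZero H M x m := by
  by_cases hx : x ∈ H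
  · rw [smulOrZero_of_mem (H.mul_mem h.2 hx), smulOrZero_of_mem hx, ← mul_smul]
    rfl
  · rw [smulOrZero_of_notMem hx, smulOrZero_of_notMem (by rwa [H.mul_mem_cancel_left h.2]),
      smul_zero]

theorem smulOrZero_mul_right (x : G) (h : H) (m : M) :
    smulOrZero H M (x * h) m = smulOrZero H M x (h • m) := by
  by_cases hx : x ∈ H
  · rw [smulOrZero_of_mem (H.mul_mem hx h.2), smulOrZero_of_mem hx, ← mul_smul]
    rfl
  · rw [smulOrZero_of_notMem hx, smulOrZero_of_notMem (by rwa [H.mul_mem_cancel_right h.2])]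

theorem smulOrZero_mul_apply_inv {x y : G} (hxy : x * y ∈ H) (φ : Coind G H M) :
    smulOrZero H M (x * y) ((φ : G → M) y⁻¹) = (φ : G → M) x := by
  rw [smulOrZero_of_mem hxy, ← φ.2, mul_inv_cancel_right]

theorem Coind.coe_smul_apply (σ : G) (φ : Coind G H M) (x : G) :
    ((σ • φ : Coind G H M) : G → M) x = (φ : G → M) (x * σ) :=
  rfl

variable (H M) in
noncomputable def Coind.single (g : G) : M →+ Coind G H M where
  toFun m := ⟨fun x => smulOrZero H M (x * g) m, fun h x => by
    dsimp only
    rw [mul_assoc, smulOrZero_mul_left]⟩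
  map_zero' := by ext; simp
  map_add' a b := by ext; simp

theorem Coind.coe_single_apply (g : G) (m : M) (x : G) :
    ((Coind.single H M g m : Coind G H M) : G → M) x = smulOrZero H M (x * g) m :=
  rfl

variable (H M) in
noncomputable def finsuppToCoind : (G →₀ M) →+ Coind G H M :=
  Finsupp.liftAddHom (Coind.single H M)

theorem finsuppToCoind_single (g : G) (m : M) :
    finsuppToCoind H M (Finsupp.single g m) = Coind.single H M g m :=
  Finsupp.liftAddHom_apply_single _ _ _

theorem indRel_le_ker_finsuppToCoind : indRel G H M ≤ (finsuppToCoind H M).ker := by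
  rw [indRel, AddSubgroup.closure_le]
  rintro _ ⟨g, h, m, rfl⟩
  ext x
  simp [finsuppToCoind_single, Coind.coe_single_apply, ← mul_assoc, smulOrZero_mul_right]

variable (H M) in
/-- The inverse `g ⊗ m ↦ (x ↦ (x * g) • m)` of `coindToInd`. -/
noncomputable def indToCoind : Ind G H M →+ Coind G H M :=
  QuotientAddGroup.lift _ (finsuppToCoind H M) indRel_le_ker_finsuppToCoind

theorem indToCoind_mk (a : G →₀ M) :
    indToCoind H M (QuotientAddGroup.mk a) = finsuppToCoind H M a :=
  rfl

theorem indToCoind_smul (σ : G) (y : Ind G H M) :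
    indToCoind H M (σ • y) = σ • indToCoind H M y := by
  induction y using QuotientAddGroup.induction_on with
  | H a =>
    show finsuppToCoind H M (indSmulAux G M σ a) = σ • finsuppToCoind H M a
    have hom_eq : (finsuppToCoind H M).comp (indSmulAux G M σ) =
        (DistribSMul.toAddMonoidHom _ σ).comp (finsuppToCoind H M) := by
      refine Finsupp.addHom_ext fun g m => ?_
      ext x
      simp [indSmulAux, finsuppToCoind_single, Coind.coe_single_apply, Coind.coe_smul_apply,
        mul_assoc]
    exact DFunLike.congr_fun hom_eq a

end

section FiniteIndex

variable {G : Type} [Group G] {H : Subgroup G} {M : Type} [AddCommGroup M] [DistribMulAction H M]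
  [Finite (G ⧸ H)]

theorem coindToInd_eq_sum [Fintype (G ⧸ H)] (φ : Coind G H M) :
    coindToInd G H M φ = QuotientAddGroup.mk
      (∑ c : G ⧸ H, Finsupp.single (Quotient.out c) ((φ : G → M) (Quotient.out c)⁻¹)) := by
  rw [coindToInd, Subsingleton.elim (Fintype.ofFinite (G ⧸ H)) ‹_›]

theorem coindToInd_add (φ ψ : Coind G H M) :
    coindToInd G H M (φ + ψ) = coindToInd G H M φ + coindToInd G H M ψ := by
  have := Fintype.ofFinite (G ⧸ H)
  simp only [coindToInd_eq_sum, AddSubgroup.coe_add, Pi.add_apply, Finsupp.single_add,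
    Finset.sum_add_distrib, QuotientAddGroup.mk_add]
  rfl

variable (H M) in
noncomputable def coindToIndHom : Coind G H M →+ Ind G H M :=
  AddMonoidHom.mk' (coindToInd G H M) coindToInd_add

/-- Only the coset `g H` contributes; with `g₀` its representative,
`g₀ ⊗ (g₀⁻¹ * g) • m = g ⊗ m`. -/
theorem coindToInd_single (g : G) (m : M) :
    coindToInd G H M (Coind.single H M g m) = QuotientAddGroup.mk (Finsupp.single g m) := by
  have := Fintype.ofFinite (G ⧸ H)
  rw [coindToInd_eq_sum, Fintype.sum_eq_single (g : G ⧸ H) fun c hc => by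
    rw [Coind.coe_single_apply, smulOrZero_of_notMem
      (mt (QuotientGroup.out_inv_mul_mem_iff c g).mp hc), Finsupp.single_zero]]
  have hmem := (QuotientGroup.out_inv_mul_mem_iff (g : G ⧸ H) g).mpr rfl
  rw [Coind.coe_single_apply, smulOrZero_of_mem hmem, ← Ind.mk_single_mul, mul_inv_cancel_left]

theorem coindToInd_indToCoind (y : Ind G H M) : coindToInd G H M (indToCoind H M y) = y := by
  induction y using QuotientAddGroup.induction_on with
  | H a =>
    have hom_eq : (coindToIndHom H M).comp (finsuppToCoind H M) =
        QuotientAddGroup.mk' (indRel G H M) :=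
      Finsupp.addHom_ext fun g m => by
        rw [AddMonoidHom.comp_apply, finsuppToCoind_single]
        exact coindToInd_single g m
    exact DFunLike.congr_fun hom_eq a

/-- At `x`, only the coset of `x⁻¹` contributes, and there equivariance of `φ` returns `φ x`. -/
theorem indToCoind_coindToInd (φ : Coind G H M) : indToCoind H M (coindToInd G H M φ) = φ := by
  have := Fintype.ofFinite (G ⧸ H)
  ext x
  rw [coindToInd_eq_sum, indToCoind_mk, map_sum, AddSubmonoidClass.coe_finsetSum,
    Finset.sum_apply, Fintype.sum_eq_single ((x⁻¹ : G) : G ⧸ H) fun c hc => by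
      rw [finsuppToCoind_single, Coind.coe_single_apply, smulOrZero_of_notMem
        (mt (QuotientGroup.mul_out_mem_iff x c).mp hc)]]
  rw [finsuppToCoind_single, Coind.coe_single_apply,
    smulOrZero_mul_apply_inv ((QuotientGroup.mul_out_mem_iff x _).mpr rfl)]

end FiniteIndex

/-- If `M` is an `H`-module and `H ≤ G` has finite index, then the map sending `φ` to
`Σ_j g_j ⊗ φ(g_j⁻¹)` (where `g_1, …, g_n` are coset representatives of `H` in `G`) is an
isomorphism of `G`-modules from the coinduced module `Hom_{ℤ[H]}(ℤ[G], M)` to the induced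
module `ℤ[G] ⊗_{ℤ[H]} M`. -/
theorem coinduced_iso_induced_of_finiteIndex (G : Type) [Group G] (H : Subgroup G)
    (M : Type) [AddCommGroup M] [DistribMulAction H M] [Finite (G ⧸ H)] :
    Function.Bijective (coindToInd G H M) ∧
    (∀ a b : Coind G H M,
      coindToInd G H M (a + b) = coindToInd G H M a + coindToInd G H M b) ∧
    (∀ (σ : G) (φ : Coind G H M),
      coindToInd G H M (σ • φ) = σ • coindToInd G H M φ) := by
  have left_inv : Function.LeftInverse (indToCoind H M) (coindToInd G H M) :=
    indToCoind_coindToInd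
  have right_inv : Function.RightInverse (indToCoind H M) (coindToInd G H M) :=
    coindToInd_indToCoind
  refine ⟨⟨left_inv.injective, right_inv.surjective⟩, coindToInd_add, fun σ φ => ?_⟩
  apply right_inv.injective
  rw [indToCoind_smul, left_inv, left_inv]
end

section
/- Inflation-restriction exactness: if H is a normal subgroup of G, M a G-module, r ≥ 1, and H^i(H, M) = 0 for all 0 < i < r, then the sequence 0 → H^r(G/H, M^H) → H^r(G, M) → H^r(H, M), with maps inflation and restriction, is exact. -/
section

variable (G : Type) [Group G] (H : Subgroup G) [hN : H.Normal]
variable (M : Type) [AddCommGroup M] [DistribMulAction G M]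

/-- The `H`-invariants `M^H` of a `G`-module. -/
def Hinvariants : AddSubgroup M where
  carrier := {m : M | ∀ h : H, (h : G) • m = m}
  zero_mem' := fun h => smul_zero _
  add_mem' := fun ha hb h => by rw [smul_add, ha h, hb h]
  neg_mem' := fun ha h => by rw [smul_neg, ha h]

/-- The induced action of `G/H` on `M^H`. -/
noncomputable instance quotientInvariantsAction :
    DistribMulAction (G ⧸ H) (Hinvariants G H M) where
  smul c m :=
    Quotient.liftOn' c
      (fun g => (⟨g • (m : M), fun h' => by
        have e : (h' : G) * g = g * (g⁻¹ * (h' : G) * g) := by group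
        rw [← mul_smul, e, mul_smul,
          m.2 ⟨g⁻¹ * (h' : G) * g, by
            have := hN.conj_mem (h' : G) h'.2 g⁻¹
            simpa using this⟩]⟩ : Hinvariants G H M))
      (fun a b hab => by
        refine Subtype.ext ?_
        have hmem : a⁻¹ * b ∈ H := QuotientGroup.leftRel_apply.mp hab
        show a • (m : M) = b • (m : M)
        calc a • (m : M) = a • ((a⁻¹ * b) • (m : M)) := by rw [m.2 ⟨a⁻¹ * b, hmem⟩]
          _ = b • (m : M) := by rw [← mul_smul, mul_inv_cancel_left])
  one_smul m := Subtype.ext (one_smul G (m : M))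
  mul_smul c d m := by
    induction c using Quotient.inductionOn' with
    | h a =>
      induction d using Quotient.inductionOn' with
      | h b => exact Subtype.ext (mul_smul a b (m : M))
  smul_zero c := by
    induction c using Quotient.inductionOn' with
    | h a => exact Subtype.ext (smul_zero a)
  smul_add c m n := by
    induction c using Quotient.inductionOn' with
    | h a => exact Subtype.ext (smul_add a (m : M) (n : M))

/-- Inflation on inhomogeneous cochains. -/
noncomputable def inflationC (r : ℕ) (f : GroupCoh.C (G ⧸ H) (Hinvariants G H M) r) :
    GroupCoh.C G M r :=
  fun γ => ((f (fun i => QuotientGroup.mk (γ i)) : Hinvariants G H M) : M)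

/-- Restriction on inhomogeneous cochains. -/
def restrictionC (r : ℕ) (f : GroupCoh.C G M r) : GroupCoh.C H M r :=
  fun γ => f (fun i => (γ i : G))

end

/-!
Dimension shifting. Embed `M` into the coinduced module `Coind G M = (G → M)` and let `Q` be
the quotient. The coinduced module is acyclic for `G`, for `H`, and, after taking
`H`-invariants, for `G ⧸ H`; once `H¹(H, M) = 0`, taking `H`-invariants keeps
`0 → M → Coind G M → Q → 0` exact. The connecting maps then trade cocycles of `M` in degree `r`
for cocycles of `Q` in degree `r - 1`, compatibly with inflation and restriction, and
`H^i(H, Q) = H^{i+1}(H, M)`; so the claims in degree `r` follow from those in degree `r - 1`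
for `Q`. In degree one they are checked directly on cocycles. Restriction after inflation turns
a cocycle `f` into the constant cochain with value `f(1, …, 1)`, which is a coboundary.
-/

section ContractNth

lemma Fin.contractNth_zero_cons {α : Type} [Mul α] {n : ℕ} (a : α) (g : Fin (n + 1) → α) :
    Fin.contractNth 0 (· * ·) (Fin.cons a g) = Fin.cons (a * g 0) (fun i => g i.succ) := by
  funext i
  induction i using Fin.cases with
  | zero =>
      rw [Fin.contractNth_apply_of_eq _ _ _ _ (by simp)]
      simp
  | succ k =>
      rw [Fin.contractNth_apply_of_gt _ _ _ _ (by simp), Fin.cons_succ, Fin.cons_succ]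

lemma Fin.contractNth_succ_cons {α : Type} [Mul α] {n : ℕ} (j : Fin (n + 1)) (a : α)
    (g : Fin (n + 1) → α) :
    Fin.contractNth j.succ (· * ·) (Fin.cons a g) = Fin.cons a (Fin.contractNth j (· * ·) g) := by
  funext i
  induction i using Fin.cases with
  | zero =>
      rw [Fin.contractNth_apply_of_lt _ _ _ _ (by simp)]
      simp
  | succ k =>
      rw [Fin.cons_succ]
      rcases lt_trichotomy (k : ℕ) (j : ℕ) with h | h | h
      · rw [Fin.contractNth_apply_of_lt _ _ _ _ (by simpa using h),
          Fin.contractNth_apply_of_lt _ _ _ _ h, Fin.castSucc_succ, Fin.cons_succ]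
      · rw [Fin.contractNth_apply_of_eq _ _ _ _ (by simpa using h),
          Fin.contractNth_apply_of_eq _ _ _ _ h, Fin.castSucc_succ, Fin.cons_succ,
          Fin.cons_succ]
      · rw [Fin.contractNth_apply_of_gt _ _ _ _ (by simpa using h),
          Fin.contractNth_apply_of_gt _ _ _ _ h, Fin.cons_succ]

lemma Fin.contractNth_one {α : Type} [MulOneClass α] {n : ℕ} (j : Fin (n + 1)) :
    Fin.contractNth j (· * ·) (1 : Fin (n + 1) → α) = 1 := by
  funext i
  rcases lt_trichotomy (i : ℕ) j with h | h | h
  · rw [Fin.contractNth_apply_of_lt _ _ _ _ h]; rfl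
  · rw [Fin.contractNth_apply_of_eq _ _ _ _ h]; exact one_mul 1
  · rw [Fin.contractNth_apply_of_gt _ _ _ _ h]; rfl

end ContractNth

namespace GroupCoh

section Naturality

variable {Γ Γ' A A' : Type} [Group Γ] [Group Γ'] [AddCommGroup A] [DistribMulAction Γ A]
  [AddCommGroup A'] [DistribMulAction Γ' A']

lemma dPlus_apply {n : ℕ} (f : C Γ A n) (γ : Fin (n + 1) → Γ) :
    dPlus Γ A n f γ = γ 0 • f (fun i => γ i.succ) +
      ∑ j : Fin (n + 1), ((-1 : ℤ) ^ (j.val + 1)) • f (Fin.contractNth j (· * ·) γ) :=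
  rfl

-- `dPlus` is definitionally Mathlib's `inhomogeneousCochains.d`.
lemma dPlus_dPlus {n : ℕ} (f : C Γ A n) : dPlus Γ A (n + 1) (dPlus Γ A n f) = 0 :=
  congrArg (fun φ => ModuleCat.Hom.hom φ f) <|
    groupCohomology.inhomogeneousCochains.d_comp_d n
      (Rep.of (Representation.ofDistribMulAction ℤ Γ A))

def cochainMap (ψ : Γ' →* Γ) (φ : A →+ A') {n : ℕ} (f : C Γ A n) : C Γ' A' n :=
  fun γ => φ (f (ψ ∘ γ))

lemma dPlus_cochainMap (ψ : Γ' →* Γ) (φ : A →+ A') (hφ : ∀ γ a, φ (ψ γ • a) = γ • φ a)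
    {n : ℕ} (f : C Γ A n) :
    dPlus Γ' A' n (cochainMap ψ φ f) = cochainMap ψ φ (dPlus Γ A n f) := by
  funext γ
  simp only [cochainMap, dPlus_apply, map_add, map_sum, map_zsmul, ← hφ,
    Fin.comp_contractNth (· * ·) (· * ·) (map_mul ψ)]
  rfl

lemma cochainMap_mem_ker (ψ : Γ' →* Γ) (φ : A →+ A') (hφ : ∀ γ a, φ (ψ γ • a) = γ • φ a)
    {n : ℕ} {f : C Γ A n} (hf : f ∈ (dPlus Γ A n).ker) :
    cochainMap ψ φ f ∈ (dPlus Γ' A' n).ker := by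
  rw [AddMonoidHom.mem_ker, dPlus_cochainMap ψ φ hφ, hf]
  funext γ
  exact map_zero φ

end Naturality

section PostComp

variable {Γ A B : Type} [Group Γ] [AddCommGroup A] [DistribMulAction Γ A]
  [AddCommGroup B] [DistribMulAction Γ B]

lemma dPlus_comp (φ : A →+ B) (hφ : ∀ (γ : Γ) a, φ (γ • a) = γ • φ a) {n : ℕ} (f : C Γ A n) :
    dPlus Γ B n (φ ∘ f) = φ ∘ dPlus Γ A n f :=
  dPlus_cochainMap (MonoidHom.id Γ) φ hφ f

lemma comp_mem_ker (φ : A →+ B) (hφ : ∀ (γ : Γ) a, φ (γ • a) = γ • φ a) {n : ℕ} {f : C Γ A n}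
    (hf : f ∈ (dPlus Γ A n).ker) : φ ∘ f ∈ (dPlus Γ B n).ker :=
  cochainMap_mem_ker (MonoidHom.id Γ) φ hφ hf

end PostComp

def Acyclic (Γ A : Type) [Group Γ] [AddCommGroup A] [DistribMulAction Γ A] : Prop :=
  ∀ n, (dPlus Γ A (n + 1)).ker ≤ (dPlus Γ A n).range

lemma Acyclic.of_addEquiv {Γ A B : Type} [Group Γ] [AddCommGroup A] [DistribMulAction Γ A]
    [AddCommGroup B] [DistribMulAction Γ B] (e : A ≃+ B) (he : ∀ (γ : Γ) a, e (γ • a) = γ • e a)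
    (hB : Acyclic Γ B) : Acyclic Γ A := by
  have he' : ∀ (γ : Γ) b, e.symm (γ • b) = γ • e.symm b := fun γ b =>
    e.injective (by rw [he, AddEquiv.apply_symm_apply, AddEquiv.apply_symm_apply])
  intro n f hf
  obtain ⟨w, hw⟩ := hB n (comp_mem_ker e.toAddMonoidHom he hf)
  refine ⟨e.symm.toAddMonoidHom ∘ w, ?_⟩
  rw [dPlus_comp _ he', hw]
  funext γ
  exact e.symm_apply_apply (f γ)

section Coinduced

variable {Γ A : Type} [AddCommGroup A]

def Coind (Γ A : Type) : Type := Γ → A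

instance : AddCommGroup (Coind Γ A) := Pi.addCommGroup

def Coind.eval (x : Γ) : Coind Γ A →+ A := Pi.evalAddMonoidHom (fun _ => A) x

lemma Coind.ext {φ ψ : Coind Γ A} (h : ∀ x, Coind.eval x φ = Coind.eval x ψ) : φ = ψ :=
  funext h

variable [Group Γ]

instance : DistribMulAction Γ (Coind Γ A) where
  smul g φ := fun x => φ (x * g)
  one_smul φ := funext fun x => congrArg φ (mul_one x)
  mul_smul g h φ := funext fun x => congrArg φ (mul_assoc x g h).symm
  smul_zero _ := rfl
  smul_add _ _ _ := rfl

lemma Coind.eval_smul (x g : Γ) (φ : Coind Γ A) : Coind.eval x (g • φ) = Coind.eval (x * g) φ :=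
  rfl

def coindHomotopy {n : ℕ} (f : C Γ (Coind Γ A) (n + 1)) : C Γ (Coind Γ A) n :=
  fun γ => (fun x => Coind.eval 1 (f (Fin.cons x γ)) : Γ → A)

lemma dPlus_coindHomotopy_add {n : ℕ} (f : C Γ (Coind Γ A) (n + 1)) :
    dPlus Γ _ n (coindHomotopy f) + coindHomotopy (dPlus Γ _ (n + 1) f) = f := by
  funext γ
  refine Coind.ext fun x => ?_
  have hsign : ∀ j : ℕ, (-1 : ℤ) ^ (j + 1 + 1) = -(-1 : ℤ) ^ (j + 1) := fun j => by ring
  have heval : ∀ {m} (g : C Γ (Coind Γ A) (m + 1)) (δ : Fin m → Γ) (y : Γ),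
      Coind.eval y (coindHomotopy g δ) = Coind.eval 1 (g (Fin.cons y δ)) := fun _ _ _ => rfl
  simp only [Pi.add_apply, map_add, dPlus_apply, map_sum, map_zsmul, Coind.eval_smul, heval,
    one_mul, Fin.cons_zero, Fin.cons_succ]
  rw [Fin.sum_univ_succ (n := n + 1)]
  simp only [Fin.val_zero, zero_add, pow_one, Fin.val_succ, hsign, neg_smul, one_smul,
    Fin.contractNth_zero_cons, Fin.contractNth_succ_cons, Finset.sum_neg_distrib]
  abel

theorem acyclic_coind : Acyclic Γ (Coind Γ A) := by
  intro n f hf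
  refine ⟨coindHomotopy f, ?_⟩
  have h0 : coindHomotopy (0 : C Γ (Coind Γ A) (n + 2)) = 0 := rfl
  simpa [AddMonoidHom.mem_ker.mp hf, h0] using dPlus_coindHomotopy_add f

end Coinduced

structure ShortExact (Γ A B Q : Type) [Group Γ] [AddCommGroup A] [DistribMulAction Γ A]
    [AddCommGroup B] [DistribMulAction Γ B] [AddCommGroup Q] [DistribMulAction Γ Q] where
  ι : A →+ B
  π : B →+ Q
  ι_smul : ∀ (γ : Γ) (a : A), ι (γ • a) = γ • ι a
  π_smul : ∀ (γ : Γ) (b : B), π (γ • b) = γ • π b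
  injective : Function.Injective ι
  surjective : Function.Surjective π
  exact : Function.Exact ι π

namespace ShortExact

variable {Γ A B Q : Type} [Group Γ] [AddCommGroup A] [DistribMulAction Γ A]
  [AddCommGroup B] [DistribMulAction Γ B] [AddCommGroup Q] [DistribMulAction Γ Q]
  (E : ShortExact Γ A B Q)

/-- `a` represents the image of the class of `c` under the connecting map
`Hⁿ(Γ, Q) → Hⁿ⁺¹(Γ, A)`. -/
def Delta {n : ℕ} (c : C Γ Q n) (a : C Γ A (n + 1)) : Prop :=
  ∃ b : C Γ B n, E.π ∘ b = c ∧ dPlus Γ B n b = E.ι ∘ a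

lemma exists_comp_eq_of_comp_eq_zero {X : Type} {w : X → B} (hw : E.π ∘ w = 0) :
    ∃ a : X → A, E.ι ∘ a = w := by
  choose a ha using fun x => (E.exact (w x)).mp (congrFun hw x)
  exact ⟨a, funext ha⟩

lemma exists_delta {n : ℕ} {c : C Γ Q n} (hc : c ∈ (dPlus Γ Q n).ker) : ∃ a, E.Delta c a := by
  obtain ⟨b, rfl⟩ := E.surjective.comp_left c
  obtain ⟨a, ha⟩ := E.exists_comp_eq_of_comp_eq_zero (w := dPlus Γ B n b)
    (by rw [← dPlus_comp E.π E.π_smul]; exact hc)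
  exact ⟨a, b, rfl, ha.symm⟩

lemma exists_delta_of_mem_ker (hB : Acyclic Γ B) {n : ℕ} {a : C Γ A (n + 1)}
    (ha : a ∈ (dPlus Γ A (n + 1)).ker) : ∃ c, E.Delta c a := by
  obtain ⟨b, hb⟩ := hB n (comp_mem_ker E.ι E.ι_smul ha)
  exact ⟨E.π ∘ b, b, rfl, hb⟩

variable {E}

namespace Delta

lemma mem_ker {n : ℕ} {c : C Γ Q n} {a : C Γ A (n + 1)} (h : E.Delta c a) :
    a ∈ (dPlus Γ A (n + 1)).ker := by
  obtain ⟨b, -, hb⟩ := h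
  apply E.injective.comp_left
  beta_reduce
  rw [← dPlus_comp E.ι E.ι_smul, ← hb, dPlus_dPlus]
  funext γ
  exact (map_zero E.ι).symm

lemma mem_ker_left {n : ℕ} {c : C Γ Q n} {a : C Γ A (n + 1)} (h : E.Delta c a) :
    c ∈ (dPlus Γ Q n).ker := by
  obtain ⟨b, rfl, hb⟩ := h
  rw [AddMonoidHom.mem_ker, dPlus_comp E.π E.π_smul, hb]
  funext γ
  exact E.exact.apply_apply_eq_zero (a γ)

lemma exists_mem_ker_comp_eq {n : ℕ} {c : C Γ Q n} {a : C Γ A (n + 1)} (h : E.Delta c a)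
    (ha : a ∈ (dPlus Γ A n).range) : ∃ b ∈ (dPlus Γ B n).ker, E.π ∘ b = c := by
  obtain ⟨b, rfl, hb⟩ := h
  obtain ⟨a', rfl⟩ := ha
  refine ⟨b - E.ι ∘ a', ?_, ?_⟩
  · rw [AddMonoidHom.mem_ker, map_sub, hb, dPlus_comp E.ι E.ι_smul, sub_self]
  · funext γ
    simp [E.exact.apply_apply_eq_zero]

lemma mem_range_of_mem_range (hB : Acyclic Γ B) {n : ℕ} {c : C Γ Q (n + 1)}
    {a : C Γ A (n + 2)} (h : E.Delta c a) (ha : a ∈ (dPlus Γ A (n + 1)).range) :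
    c ∈ (dPlus Γ Q n).range := by
  obtain ⟨b, hb, rfl⟩ := h.exists_mem_ker_comp_eq ha
  obtain ⟨w, rfl⟩ := hB n hb
  exact ⟨E.π ∘ w, dPlus_comp E.π E.π_smul w⟩

lemma mem_range {n : ℕ} {c : C Γ Q (n + 1)} {a : C Γ A (n + 2)} (h : E.Delta c a)
    (hc : c ∈ (dPlus Γ Q n).range) : a ∈ (dPlus Γ A (n + 1)).range := by
  obtain ⟨b, rfl, hb⟩ := h
  obtain ⟨e, he⟩ := hc
  obtain ⟨e', rfl⟩ := E.surjective.comp_left e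
  have hπ : E.π ∘ (b - dPlus Γ B n e') = E.π ∘ b - dPlus Γ Q n (E.π ∘ e') := by
    rw [dPlus_comp E.π E.π_smul]
    funext γ
    simp
  obtain ⟨a', ha'⟩ := E.exists_comp_eq_of_comp_eq_zero (w := b - dPlus Γ B n e') <| by
    rw [hπ, he, sub_self]
  refine ⟨a', E.injective.comp_left ?_⟩
  beta_reduce
  rw [← dPlus_comp E.ι E.ι_smul, ha', map_sub, dPlus_dPlus, sub_zero, hb]

lemma mem_range_iff (hB : Acyclic Γ B) {n : ℕ} {c : C Γ Q (n + 1)} {a : C Γ A (n + 2)}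
    (h : E.Delta c a) : a ∈ (dPlus Γ A (n + 1)).range ↔ c ∈ (dPlus Γ Q n).range :=
  ⟨h.mem_range_of_mem_range hB, h.mem_range⟩

lemma sub {n : ℕ} {c c' : C Γ Q n} {a a' : C Γ A (n + 1)} (h : E.Delta c a)
    (h' : E.Delta c' a') : E.Delta (c - c') (a - a') := by
  obtain ⟨b, rfl, hb⟩ := h
  obtain ⟨b', rfl, hb'⟩ := h'
  refine ⟨b - b', ?_, ?_⟩
  · funext γ
    simp
  · rw [map_sub, hb, hb']
    funext γ
    simp

lemma cochainMap {Γ' A' B' Q' : Type} [Group Γ'] [AddCommGroup A'] [DistribMulAction Γ' A']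
    [AddCommGroup B'] [DistribMulAction Γ' B'] [AddCommGroup Q'] [DistribMulAction Γ' Q']
    {E' : ShortExact Γ' A' B' Q'} (ψ : Γ' →* Γ) (αA : A →+ A') (αB : B →+ B') (αQ : Q →+ Q')
    (hαB : ∀ γ b, αB (ψ γ • b) = γ • αB b) (hι : ∀ a, αB (E.ι a) = E'.ι (αA a))
    (hπ : ∀ b, αQ (E.π b) = E'.π (αB b)) {n : ℕ} {c : C Γ Q n} {a : C Γ A (n + 1)}
    (h : E.Delta c a) : E'.Delta (GroupCoh.cochainMap ψ αQ c) (GroupCoh.cochainMap ψ αA a) := by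
  obtain ⟨b, rfl, hb⟩ := h
  refine ⟨GroupCoh.cochainMap ψ αB b, ?_, ?_⟩
  · funext γ
    exact (hπ _).symm
  · rw [dPlus_cochainMap ψ αB hαB, hb]
    funext γ
    exact hι _

end Delta

lemma ker_le_range_of_acyclic (E : ShortExact Γ A B Q) (hB : Acyclic Γ B) {n : ℕ}
    (hA : (dPlus Γ A (n + 2)).ker ≤ (dPlus Γ A (n + 1)).range) :
    (dPlus Γ Q (n + 1)).ker ≤ (dPlus Γ Q n).range := by
  intro c hc
  obtain ⟨a, ha⟩ := E.exists_delta hc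
  exact ha.mem_range_of_mem_range hB (hA ha.mem_ker)

end ShortExact

section LowDegree

variable {Γ A : Type} [Group Γ] [AddCommGroup A] [DistribMulAction Γ A]

lemma dPlus_zero_apply (f : C Γ A 0) (γ : Fin 1 → Γ) :
    dPlus Γ A 0 f γ = γ 0 • f ![] - f ![] := by
  rw [dPlus_apply, Fin.sum_univ_one, Subsingleton.elim (fun i => γ i.succ) ![],
    Subsingleton.elim (Fin.contractNth 0 (· * ·) γ) ![]]
  simp [sub_eq_add_neg]

lemma const_mem_ker_dPlus_zero_iff (x : A) :
    (fun _ => x : C Γ A 0) ∈ (dPlus Γ A 0).ker ↔ ∀ γ : Γ, γ • x = x := by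
  simp only [AddMonoidHom.mem_ker, funext_iff, dPlus_zero_apply, Pi.zero_apply, sub_eq_zero]
  exact ⟨fun h γ => h fun _ => γ, fun h γ => h (γ 0)⟩

lemma dPlus_one_apply (f : C Γ A 1) (γ : Fin 2 → Γ) :
    dPlus Γ A 1 f γ = γ 0 • f (fun _ => γ 1) - f (fun _ => γ 0 * γ 1) + f (fun _ => γ 0) := by
  have h₀ : Fin.contractNth 0 (· * ·) γ = fun _ => γ 0 * γ 1 := funext fun i => by
    fin_cases i; rfl
  have h₁ : Fin.contractNth 1 (· * ·) γ = fun _ => γ 0 := funext fun i => by fin_cases i; rfl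
  have ht : (fun i : Fin 1 => γ i.succ) = fun _ => γ 1 := funext fun i => by fin_cases i; rfl
  show γ 0 • f (fun i => γ i.succ) +
      ∑ j : Fin 2, ((-1 : ℤ) ^ (j.val + 1)) • f (Fin.contractNth j (· * ·) γ) = _
  rw [Fin.sum_univ_two, ht, Fin.val_zero, Fin.val_one, h₀, h₁]
  simp only [zero_add, pow_one, neg_smul, one_smul, Int.reduceNeg]
  abel

lemma cocycle_one_mul {f : C Γ A 1} (hf : f ∈ (dPlus Γ A 1).ker) (a b : Γ) :
    f (fun _ => a * b) = a • f (fun _ => b) + f (fun _ => a) := by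
  have h := congrFun hf ![a, b]
  rw [dPlus_one_apply, sub_add_eq_add_sub, Pi.zero_apply, sub_eq_zero] at h
  exact h.symm

lemma cocycle_one_one {f : C Γ A 1} (hf : f ∈ (dPlus Γ A 1).ker) : f (fun _ => 1) = 0 := by
  have h := cocycle_one_mul hf 1 1
  simp only [mul_one, one_smul, left_eq_add] at h
  exact h

lemma dPlus_const_apply {n : ℕ} (x : A) (γ : Fin (n + 1) → Γ) (hx : γ 0 • x = x) :
    dPlus Γ A n (fun _ => x) γ = if Even n then 0 else x := by
  rw [dPlus_apply, hx, ← Finset.sum_smul, Fin.sum_univ_eq_sum_range (fun j => (-1 : ℤ) ^ (j + 1))]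
  simp only [pow_succ, mul_neg_one, Finset.sum_neg_distrib, neg_one_geom_sum, Nat.even_add_one]
  split_ifs <;> simp

lemma dPlus_apply_one {n : ℕ} (f : C Γ A n) : dPlus Γ A n f 1 = dPlus Γ A n (fun _ => f 1) 1 := by
  simp only [dPlus_apply, Fin.contractNth_one]
  rfl

end LowDegree

section Invariants

variable {G : Type} [Group G] {A B Q : Type} [AddCommGroup A] [DistribMulAction G A]
  [AddCommGroup B] [DistribMulAction G B] [AddCommGroup Q] [DistribMulAction G Q]

def ShortExact.restrict (E : ShortExact G A B Q) (H : Subgroup G) : ShortExact H A B Q :=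
  { E with
    ι_smul := fun h => E.ι_smul h
    π_smul := fun h => E.π_smul h }

variable (H : Subgroup G)

def invariantsMap (φ : A →+ B) (hφ : ∀ (g : G) a, φ (g • a) = g • φ a) :
    Hinvariants G H A →+ Hinvariants G H B :=
  (φ.comp (Hinvariants G H A).subtype).codRestrict (Hinvariants G H B) fun x h => by
    simp only [AddMonoidHom.coe_comp, AddSubgroup.coe_subtype, Function.comp_apply, ← hφ,
      x.2 h]

lemma invariantsMap_smul [H.Normal] (φ : A →+ B) (hφ : ∀ (g : G) a, φ (g • a) = g • φ a) (c : G ⧸ H)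
    (x : Hinvariants G H A) : invariantsMap H φ hφ (c • x) = c • invariantsMap H φ hφ x := by
  induction c using QuotientGroup.induction_on with
  | H g => exact Subtype.ext (hφ g x)

lemma ShortExact.exact_invariantsMap (E : ShortExact G A B Q) :
    Function.Exact (invariantsMap H E.ι E.ι_smul) (invariantsMap H E.π E.π_smul) := by
  intro y
  constructor
  · intro hy
    obtain ⟨a, ha⟩ := (E.exact y).mp (congrArg Subtype.val hy)
    refine ⟨⟨a, fun h => E.injective ?_⟩, Subtype.ext ha⟩
    rw [E.ι_smul, ha, y.2 h]
  · rintro ⟨a, rfl⟩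
    exact Subtype.ext (E.exact.apply_apply_eq_zero (a : A))

/-- The obstruction is the connecting image in `H¹(H, A)` of `q`, viewed as a `0`-cocycle
of `H`. -/
lemma ShortExact.exists_invariant_lift (E : ShortExact G A B Q)
    (hA : (dPlus H A 1).ker ≤ (dPlus H A 0).range) {q : Q} (hq : q ∈ Hinvariants G H Q) :
    ∃ b ∈ Hinvariants G H B, E.π b = q := by
  obtain ⟨a, ha⟩ := (E.restrict H).exists_delta ((const_mem_ker_dPlus_zero_iff q).mpr hq)
  obtain ⟨b, hb, hπb⟩ := ha.exists_mem_ker_comp_eq (hA ha.mem_ker)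
  have hb_const : b = fun _ => b ![] := funext fun γ => congrArg b (Subsingleton.elim _ _)
  rw [hb_const] at hb
  exact ⟨b ![], (const_mem_ker_dPlus_zero_iff _).mp hb, congrFun hπb ![]⟩

def ShortExact.invariants [H.Normal] (E : ShortExact G A B Q)
    (hA : (dPlus H A 1).ker ≤ (dPlus H A 0).range) :
    ShortExact (G ⧸ H) (Hinvariants G H A) (Hinvariants G H B) (Hinvariants G H Q) where
  ι := invariantsMap H E.ι E.ι_smul
  π := invariantsMap H E.π E.π_smul
  ι_smul := invariantsMap_smul H E.ι E.ι_smul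
  π_smul := invariantsMap_smul H E.π E.π_smul
  injective _ _ h := Subtype.ext (E.injective (congrArg Subtype.val h))
  surjective q :=
    let ⟨b, hb, hbq⟩ := E.exists_invariant_lift H hA q.2
    ⟨⟨b, hb⟩, Subtype.ext hbq⟩
  exact := E.exact_invariantsMap H

end Invariants

section CoindSeq

variable (G M : Type) [Group G] [AddCommGroup M] [DistribMulAction G M]

def Coind.embed : M →+ Coind G M where
  toFun m := fun x => x • m
  map_zero' := funext fun x => smul_zero x
  map_add' a b := funext fun x => smul_add x a b

variable {G M} in
lemma Coind.embed_smul (g : G) (m : M) : Coind.embed G M (g • m) = g • Coind.embed G M m :=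
  funext fun x => (mul_smul x g m).symm

lemma Coind.embed_injective : Function.Injective (Coind.embed G M) := fun a b h => by
  have h1 : (1 : G) • a = (1 : G) • b := congrFun h 1
  rwa [one_smul, one_smul] at h1

def CoindQuot : Type := Coind G M ⧸ (Coind.embed G M).range

instance : AddCommGroup (CoindQuot G M) := QuotientAddGroup.Quotient.addCommGroup _

instance : SMul G (CoindQuot G M) :=
  ⟨fun g => QuotientAddGroup.map _ _ (DistribSMul.toAddMonoidHom (Coind G M) g) <| by
    rintro _ ⟨m, rfl⟩
    exact ⟨g • m, Coind.embed_smul g m⟩⟩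

noncomputable instance : DistribMulAction G (CoindQuot G M) :=
  Function.Surjective.distribMulAction (QuotientAddGroup.mk' _)
    (QuotientAddGroup.mk'_surjective _) fun _ _ => rfl

def coindSeq : ShortExact G M (Coind G M) (CoindQuot G M) where
  ι := Coind.embed G M
  π := QuotientAddGroup.mk' _
  ι_smul := Coind.embed_smul
  π_smul _ _ := rfl
  injective := Coind.embed_injective G M
  surjective := QuotientAddGroup.mk'_surjective _
  exact v := QuotientAddGroup.eq_zero_iff v

end CoindSeq

section CoindAcyclic

variable {G A : Type} [Group G] [AddCommGroup A] (H : Subgroup G)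

/-- `G` is the disjoint union of the cosets `q.out * H`, so restricted to `H` the coinduced
module is coinduced again. -/
noncomputable def coindSubgroupEquiv : Coind G A ≃+ Coind H (G ⧸ H → A) where
  toFun φ := (fun h q => φ (q.out * h) : H → G ⧸ H → A)
  invFun ψ := (fun x => ψ ⟨(x : G ⧸ H).out⁻¹ * x, QuotientGroup.eq.mp (QuotientGroup.out_eq' _)⟩ x
    : G → A)
  left_inv φ := funext fun x => congrArg φ (mul_inv_cancel_left _ x)
  right_inv ψ := by
    funext h q
    have hq : ((q.out * h : G) : G ⧸ H) = q := by
      rw [QuotientGroup.mk_mul_of_mem _ h.2, QuotientGroup.out_eq']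
    exact congr_arg₂ (fun h' q' => ψ h' q') (Subtype.ext (by simp [hq])) hq
  map_add' _ _ := rfl

lemma acyclic_coind_subgroup : Acyclic H (Coind G A) :=
  Acyclic.of_addEquiv (coindSubgroupEquiv H) (fun _ φ => funext fun _ => funext fun _ =>
    congrArg φ (mul_assoc _ _ _)) acyclic_coind

lemma Hinvariants.coind_apply_eq_of_mk_eq {φ : Hinvariants G H (Coind G A)} {x y : G}
    (hxy : (x : G ⧸ H) = y) : (φ : Coind G A) x = (φ : Coind G A) y := by
  have h : (φ : Coind G A) (x * (x⁻¹ * y)) = (φ : Coind G A) x :=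
    congrFun (φ.2 ⟨_, QuotientGroup.eq.mp hxy⟩) x
  rw [mul_inv_cancel_left] at h
  exact h.symm

variable [H.Normal]

noncomputable def invariantsCoindEquiv : Hinvariants G H (Coind G A) ≃+ Coind (G ⧸ H) A where
  toFun φ := (fun q => (φ : Coind G A) q.out : G ⧸ H → A)
  invFun ψ := ⟨(fun x => ψ x : G → A), fun h => funext fun x =>
    congrArg ψ (QuotientGroup.mk_mul_of_mem x h.2)⟩
  left_inv _ := Subtype.ext <| funext fun x =>
    Hinvariants.coind_apply_eq_of_mk_eq H (QuotientGroup.out_eq' (x : G ⧸ H))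
  right_inv ψ := funext fun q => congrArg ψ (QuotientGroup.out_eq' q)
  map_add' _ _ := rfl

lemma acyclic_invariants_coind : Acyclic (G ⧸ H) (Hinvariants G H (Coind G A)) := by
  refine Acyclic.of_addEquiv (invariantsCoindEquiv H) (fun c φ => ?_) acyclic_coind
  induction c using QuotientGroup.induction_on with
  | H g =>
    funext q
    show (φ : Coind G A) (q.out * g) = (φ : Coind G A) (q * g).out
    refine Hinvariants.coind_apply_eq_of_mk_eq H ?_
    rw [QuotientGroup.out_eq', QuotientGroup.mk_mul, QuotientGroup.out_eq']

end CoindAcyclic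

lemma ker_le_cobound_of_subsingleton {Γ A : Type} [Group Γ] [AddCommGroup A]
    [DistribMulAction Γ A] {i : ℕ} (h : Subsingleton (Hcoh Γ A i)) :
    (dPlus Γ A i).ker ≤ cobound Γ A i := fun f hf =>
  AddSubgroup.mem_addSubgroupOf.mp <|
    (QuotientAddGroup.eq_zero_iff (⟨f, hf⟩ : (dPlus Γ A i).ker)).mp
      (h.elim _ _)

section InflationRestriction

variable {G : Type} [Group G] {H : Subgroup G} {M : Type} [AddCommGroup M] [DistribMulAction G M]

lemma ShortExact.Delta.restrictionC {A B Q : Type} [AddCommGroup A] [DistribMulAction G A]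
    [AddCommGroup B] [DistribMulAction G B] [AddCommGroup Q] [DistribMulAction G Q]
    {E : ShortExact G A B Q} {n : ℕ} {c : C G Q n} {a : C G A (n + 1)} (h : E.Delta c a) :
    (E.restrict H).Delta (restrictionC G H Q n c) (restrictionC G H A (n + 1) a) :=
  h.cochainMap H.subtype (.id A) (.id B) (.id Q) (fun _ _ => rfl) (fun _ => rfl) (fun _ => rfl)

lemma inflationC_injective (n : ℕ) : Function.Injective (inflationC G H M n) := by
  intro f f' h
  funext δ
  have hδ := congrFun h fun i => (δ i).out
  simp only [inflationC, QuotientGroup.out_eq'] at hδ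
  exact Subtype.ext hδ

variable [H.Normal]

lemma ShortExact.Delta.inflationC {A B Q : Type} [AddCommGroup A] [DistribMulAction G A]
    [AddCommGroup B] [DistribMulAction G B] [AddCommGroup Q] [DistribMulAction G Q]
    {E : ShortExact G A B Q} {hA : (dPlus H A 1).ker ≤ (dPlus H A 0).range} {n : ℕ}
    {c : C (G ⧸ H) (Hinvariants G H Q) n} {a : C (G ⧸ H) (Hinvariants G H A) (n + 1)}
    (h : (E.invariants H hA).Delta c a) :
    E.Delta (inflationC G H Q n c) (inflationC G H A (n + 1) a) :=
  h.cochainMap (QuotientGroup.mk' H) (Hinvariants G H A).subtype (Hinvariants G H B).subtype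
    (Hinvariants G H Q).subtype (fun _ _ => rfl) (fun _ => rfl) (fun _ => rfl)

lemma dPlus_inflationC {n : ℕ} (f : C (G ⧸ H) (Hinvariants G H M) n) :
    dPlus G M n (inflationC G H M n f) = inflationC G H M (n + 1) (dPlus (G ⧸ H) _ n f) :=
  dPlus_cochainMap (QuotientGroup.mk' H) (Hinvariants G H M).subtype (fun _ _ => rfl) f

theorem mem_range_of_inflationC_mem_range_one {f : C (G ⧸ H) (Hinvariants G H M) 1}
    (hf : f ∈ (dPlus (G ⧸ H) (Hinvariants G H M) 1).ker)
    (hinf : inflationC G H M 1 f ∈ (dPlus G M 0).range) :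
    f ∈ (dPlus (G ⧸ H) (Hinvariants G H M) 0).range := by
  obtain ⟨m, hm⟩ := hinf
  have hm_inv : m ![] ∈ Hinvariants G H M := fun h => by
    have h₁ := congrFun hm fun _ => h
    have h₂ : (fun _ : Fin 1 => ((h : G) : G ⧸ H)) = fun _ => 1 :=
      funext fun _ => (QuotientGroup.eq_one_iff _).mpr h.2
    rw [dPlus_zero_apply] at h₁
    rw [← sub_eq_zero, h₁]
    show ((f fun _ => ((h : G) : G ⧸ H) : Hinvariants G H M) : M) = 0
    rw [h₂, cocycle_one_one hf, ZeroMemClass.coe_zero]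
  refine ⟨fun _ => ⟨m ![], hm_inv⟩, inflationC_injective 1 ?_⟩
  rw [← dPlus_inflationC, ← hm]
  congr 1
  funext γ
  exact congrArg m (Subsingleton.elim _ _)

/-- Such a cocycle is constant on the cosets `xH` and takes `H`-invariant values. -/
lemma exists_inflationC_eq_of_mem_ker_one {f : C G M 1} (hf : f ∈ (dPlus G M 1).ker)
    (hH : ∀ h ∈ H, f (fun _ => h) = 0) : ∃ f', inflationC G H M 1 f' = f := by
  have hcoset : ∀ x y : G, (x : G ⧸ H) = y → f (fun _ => y) = f (fun _ => x) := by
    intro x y hxy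
    rw [← mul_inv_cancel_left x y, cocycle_one_mul hf, hH _ (QuotientGroup.eq.mp hxy), smul_zero,
      zero_add]
  have hinv : ∀ x : G, f (fun _ => x) ∈ Hinvariants G H M := fun x h => by
    have hhx := cocycle_one_mul hf h x
    rw [hH h h.2, add_zero] at hhx
    rw [← hhx, hcoset]
    rw [QuotientGroup.eq, ← mul_assoc]
    exact Subgroup.Normal.conj_mem' ‹_› _ h.2 x
  refine ⟨fun δ => ⟨f fun _ => (δ 0).out, hinv _⟩, funext fun γ => ?_⟩
  show f (fun _ => ((γ 0 : G) : G ⧸ H).out) = f γ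
  rw [hcoset _ _ (QuotientGroup.out_eq' _).symm]
  exact congrArg f (funext fun i => congrArg γ (Subsingleton.elim 0 i))

theorem exists_inflationC_sub_mem_range_one {f : C G M 1} (hf : f ∈ (dPlus G M 1).ker)
    (hres : restrictionC G H M 1 f ∈ (dPlus H M 0).range) :
    ∃ f' ∈ (dPlus (G ⧸ H) (Hinvariants G H M) 1).ker,
      f - inflationC G H M 1 f' ∈ (dPlus G M 0).range := by
  obtain ⟨c, hc⟩ := hres
  set e : C G M 0 := fun _ => c ![]
  have hf₁ : f - dPlus G M 0 e ∈ (dPlus G M 1).ker := sub_mem hf (dPlus_dPlus e)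
  have hH : ∀ h ∈ H, (f - dPlus G M 0 e) (fun _ => h) = 0 := fun h hh => by
    have hch := congrFun hc fun _ => ⟨h, hh⟩
    rw [dPlus_zero_apply] at hch
    rw [Pi.sub_apply, dPlus_zero_apply, sub_eq_zero]
    exact hch.symm
  obtain ⟨f', hf'⟩ := exists_inflationC_eq_of_mem_ker_one hf₁ hH
  refine ⟨f', inflationC_injective 2 ?_, e, ?_⟩
  · rw [← dPlus_inflationC, hf', hf₁]
    rfl
  · rw [hf', sub_sub_cancel]

theorem restrictionC_inflationC_mem_range {k : ℕ}
    {f : C (G ⧸ H) (Hinvariants G H M) (k + 1)}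
    (hf : f ∈ (dPlus (G ⧸ H) (Hinvariants G H M) (k + 1)).ker) :
    restrictionC G H M (k + 1) (inflationC G H M (k + 1) f) ∈ (dPlus H M k).range := by
  have hres : restrictionC G H M (k + 1) (inflationC G H M (k + 1) f) = fun _ => (f 1 : M) :=
    funext fun γ => congrArg (fun δ => (f δ : M))
      (funext fun i => (QuotientGroup.eq_one_iff _).mpr (γ i).2)
  have hf₁ : (if Even (k + 1) then 0 else f 1) = 0 := by
    rw [← dPlus_const_apply (f 1) 1 (one_smul (G ⧸ H) _), ← dPlus_apply_one, hf]
    rfl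
  rw [hres]
  by_cases hk : Even k
  · rw [if_neg (Nat.not_even_iff_odd.mpr hk.add_one)] at hf₁
    rw [hf₁]
    exact zero_mem _
  · exact ⟨fun _ => (f 1 : M), funext fun γ => by
      rw [dPlus_const_apply _ γ ((f 1).2 (γ 0)), if_neg hk]⟩

end InflationRestriction

section DimensionShifting

variable {G : Type} [Group G] {H : Subgroup G}

lemma CoindQuot.ker_le_range {M : Type} [AddCommGroup M] [DistribMulAction G M] {k : ℕ}
    (hH : ∀ j < k + 1, (dPlus H M (j + 1)).ker ≤ (dPlus H M j).range) :
    ∀ j < k, (dPlus H (CoindQuot G M) (j + 1)).ker ≤ (dPlus H (CoindQuot G M) j).range :=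
  fun j hj => ((coindSeq G M).restrict H).ker_le_range_of_acyclic (acyclic_coind_subgroup H)
    (hH (j + 1) (by omega))

variable [H.Normal]

theorem mem_range_of_inflationC_mem_range {M : Type} [AddCommGroup M] [DistribMulAction G M]
    {k : ℕ} (hH : ∀ j < k, (dPlus H M (j + 1)).ker ≤ (dPlus H M j).range)
    {f : C (G ⧸ H) (Hinvariants G H M) (k + 1)}
    (hf : f ∈ (dPlus (G ⧸ H) (Hinvariants G H M) (k + 1)).ker)
    (hinf : inflationC G H M (k + 1) f ∈ (dPlus G M k).range) :
    f ∈ (dPlus (G ⧸ H) (Hinvariants G H M) k).range := by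
  induction k generalizing M with
  | zero => exact mem_range_of_inflationC_mem_range_one hf hinf
  | succ k ih =>
    obtain ⟨v, hv⟩ := ((coindSeq G M).invariants H (hH 0 k.succ_pos)).exists_delta_of_mem_ker
      (acyclic_invariants_coind H) hf
    have hinf_v := (hv.inflationC.mem_range_iff acyclic_coind).mp hinf
    exact hv.mem_range (ih (CoindQuot.ker_le_range hH) hv.mem_ker_left hinf_v)

theorem exists_inflationC_sub_mem_range {M : Type} [AddCommGroup M] [DistribMulAction G M]
    {k : ℕ} (hH : ∀ j < k, (dPlus H M (j + 1)).ker ≤ (dPlus H M j).range)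
    {f : C G M (k + 1)} (hf : f ∈ (dPlus G M (k + 1)).ker)
    (hres : restrictionC G H M (k + 1) f ∈ (dPlus H M k).range) :
    ∃ f' ∈ (dPlus (G ⧸ H) (Hinvariants G H M) (k + 1)).ker,
      f - inflationC G H M (k + 1) f' ∈ (dPlus G M k).range := by
  induction k generalizing M with
  | zero => exact exists_inflationC_sub_mem_range_one hf hres
  | succ k ih =>
    obtain ⟨v, hv⟩ := (coindSeq G M).exists_delta_of_mem_ker acyclic_coind hf
    have hres_v := (hv.restrictionC.mem_range_iff (acyclic_coind_subgroup H)).mp hres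
    obtain ⟨v', hv', hvv'⟩ := ih (CoindQuot.ker_le_range hH) hv.mem_ker_left hres_v
    obtain ⟨f', hf'⟩ := ((coindSeq G M).invariants H (hH 0 k.succ_pos)).exists_delta hv'
    exact ⟨f', hf'.mem_ker, (hv.sub hf'.inflationC).mem_range hvv'⟩

end DimensionShifting

end GroupCoh

open GroupCoh

/-- Inflation–restriction exactness: if `H ⊴ G`, `M` is a `G`-module, `r ≥ 1`, and
`H^i(H, M) = 0` for all `0 < i < r`, then
`0 → H^r(G/H, M^H) → H^r(G, M) → H^r(H, M)` is exact (expressed here on cochains: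
inflation and restriction map cocycles to cocycles, inflation is injective modulo
coboundaries, the composite is zero on cohomology, and every cocycle of `G` whose
restriction is a coboundary is, modulo coboundaries, an inflation). -/
theorem inflation_restriction_exact
    (G : Type) [Group G] (H : Subgroup G) [H.Normal]
    (M : Type) [AddCommGroup M] [DistribMulAction G M]
    (r : ℕ) (hr : 1 ≤ r)
    (hvanish : ∀ i : ℕ, 0 < i → i < r → Subsingleton (GroupCoh.Hcoh H M i)) :
    (∀ f ∈ (GroupCoh.dPlus (G ⧸ H) (Hinvariants G H M) r).ker,
      inflationC G H M r f ∈ (GroupCoh.dPlus G M r).ker) ∧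
    (∀ f ∈ (GroupCoh.dPlus G M r).ker,
      restrictionC G H M r f ∈ (GroupCoh.dPlus H M r).ker) ∧
    (∀ f ∈ (GroupCoh.dPlus (G ⧸ H) (Hinvariants G H M) r).ker,
      inflationC G H M r f ∈ GroupCoh.cobound G M r →
        f ∈ GroupCoh.cobound (G ⧸ H) (Hinvariants G H M) r) ∧
    (∀ f ∈ (GroupCoh.dPlus (G ⧸ H) (Hinvariants G H M) r).ker,
      restrictionC G H M r (inflationC G H M r f) ∈ GroupCoh.cobound H M r) ∧
    (∀ f ∈ (GroupCoh.dPlus G M r).ker,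
      restrictionC G H M r f ∈ GroupCoh.cobound H M r →
        ∃ f' ∈ (GroupCoh.dPlus (G ⧸ H) (Hinvariants G H M) r).ker,
          f - inflationC G H M r f' ∈ GroupCoh.cobound G M r) := by
  obtain ⟨k, rfl⟩ : ∃ k, r = k + 1 := ⟨r - 1, by omega⟩
  have hH : ∀ j < k, (dPlus H M (j + 1)).ker ≤ (dPlus H M j).range := fun j hj =>
    ker_le_cobound_of_subsingleton (hvanish (j + 1) j.succ_pos (by omega))
  exact ⟨fun _ hf =>
      cochainMap_mem_ker (QuotientGroup.mk' H) (Hinvariants G H M).subtype (fun _ _ => rfl) hf,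
    fun _ hf => cochainMap_mem_ker H.subtype (.id M) (fun _ _ => rfl) hf,
    fun _ hf => mem_range_of_inflationC_mem_range hH hf,
    fun _ hf => restrictionC_inflationC_mem_range hf,
    fun _ hf => exists_inflationC_sub_mem_range hH hf⟩
end
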